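/- Let f ∈ SO with f ≥ 1 pointwise, and suppose φ : SO → ℝ is a lattice-linear homomorphism with φ(f) = 1 and φ(1) = 0. Then for every ε > 0 and every finite collection g₁, …, g_k ∈ SO, there exists n ∈ ℕ such that |φ(g_i) − g_i(n)/f(n)| < ε for all i = 1, …, k. (Equivalently, φ lies in the closure of {f(n)⁻¹ · δ_n : n ∈ ℕ} in the product topology on ℝ^SO.) -/

import Mathlib

open Filter Metric Set

noncomputable section

/-- A continuous function on the half-line `[0,∞)` (modeled as `ℝ≥0`) is
slowly oscillating if for every `R > 0` and `ε > 0` there is `M > 0` with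
`diam f([x, x+R]) < ε` for all `x > M`. -/
def SO (f : NNReal → ℝ) : Prop :=
  Continuous f ∧ ∀ R : NNReal, 0 < R → ∀ ε : ℝ, 0 < ε → ∃ M : NNReal, 0 < M ∧
    ∀ x : NNReal, M < x → Metric.diam (f '' Set.Icc x (x + R)) < ε

/-- A lattice-linear homomorphism of the vector lattice `SO`, encoded as a
function on all of `NNReal → ℝ` whose homomorphism properties are required on
slowly oscillating functions. -/
def IsHom (φ : (NNReal → ℝ) → ℝ) : Prop :=
  (∀ f g : NNReal → ℝ, SO f → SO g → ∀ c d : ℝ,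
      φ (c • f + d • g) = c * φ f + d * φ g) ∧
  (∀ f g : NNReal → ℝ, SO f → SO g → φ (f ⊔ g) = φ f ⊔ φ g) ∧
  (∀ f g : NNReal → ℝ, SO f → SO g → φ (f ⊓ g) = φ f ⊓ φ g)

lemma SO_iff (f : NNReal → ℝ) : SO f ↔ Continuous f ∧
    ∀ R : NNReal, 0 < R → ∀ ε : ℝ, 0 < ε → ∃ M : NNReal, 0 < M ∧
      ∀ x : NNReal, M < x → ∀ a ∈ Set.Icc x (x + R), ∀ b ∈ Set.Icc x (x + R),
        |f a - f b| < ε := by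
  constructor
  · rintro ⟨hc, h⟩
    refine ⟨hc, fun R hR ε hε => ?_⟩
    obtain ⟨M, hM, hM2⟩ := h R hR ε hε
    refine ⟨M, hM, fun x hx a ha b hb => ?_⟩
    have hbd : Bornology.IsBounded (f '' Set.Icc x (x + R)) :=
      (isCompact_Icc.image hc).isBounded
    calc |f a - f b| = dist (f a) (f b) := (Real.dist_eq _ _).symm
      _ ≤ diam (f '' Set.Icc x (x + R)) :=
          dist_le_diam_of_mem hbd (mem_image_of_mem f ha) (mem_image_of_mem f hb)
      _ < ε := hM2 x hx
  · rintro ⟨hc, h⟩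
    refine ⟨hc, fun R hR ε hε => ?_⟩
    obtain ⟨M, hM, hM2⟩ := h R hR (ε/2) (by linarith)
    refine ⟨M, hM, fun x hx => ?_⟩
    have : diam (f '' Set.Icc x (x + R)) ≤ ε/2 := by
      apply diam_le_of_forall_dist_le (by linarith)
      rintro _ ⟨a, ha, rfl⟩ _ ⟨b, hb, rfl⟩
      rw [Real.dist_eq]
      exact (hM2 x hx a ha b hb).le
    linarith

lemma SO_const (c : ℝ) : SO (fun _ => c) := by
  refine ⟨continuous_const, fun R hR ε hε => ⟨1, one_pos, fun x hx => ?_⟩⟩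
  have : (fun _ : NNReal => c) '' Set.Icc x (x + R) ⊆ {c} := by
    rintro _ ⟨a, _, rfl⟩; rfl
  calc diam _ ≤ diam ({c} : Set ℝ) := diam_mono this (Bornology.isBounded_singleton)
    _ = 0 := diam_singleton
    _ < ε := hε

lemma SO_combo {f g : NNReal → ℝ} (hf : SO f) (hg : SO g) (c d : ℝ) :
    SO (c • f + d • g) := by
  rw [SO_iff] at *
  obtain ⟨hfc, hf⟩ := hf; obtain ⟨hgc, hg⟩ := hg
  refine ⟨(hfc.const_smul c).add (hgc.const_smul d), fun R hR ε hε => ?_⟩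
  have hc1 : (0:ℝ) < |c| + 1 := by positivity
  have hd1 : (0:ℝ) < |d| + 1 := by positivity
  obtain ⟨M1, hM1, h1⟩ := hf R hR (ε / (2 * (|c| + 1))) (by positivity)
  obtain ⟨M2, hM2, h2⟩ := hg R hR (ε / (2 * (|d| + 1))) (by positivity)
  refine ⟨max M1 M2, lt_max_of_lt_left hM1, fun x hx a ha b hb => ?_⟩
  have hx1 : M1 < x := lt_of_le_of_lt (le_max_left _ _) hx
  have hx2 : M2 < x := lt_of_le_of_lt (le_max_right _ _) hx
  have e1 := h1 x hx1 a ha b hb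
  have e2 := h2 x hx2 a ha b hb
  have : (c • f + d • g) a - (c • f + d • g) b = c * (f a - f b) + d * (g a - g b) := by
    simp [Pi.add_apply, Pi.smul_apply]; ring
  rw [this]
  calc |c * (f a - f b) + d * (g a - g b)| ≤ |c| * |f a - f b| + |d| * |g a - g b| := by
        refine (abs_add_le _ _).trans ?_; rw [abs_mul, abs_mul]
    _ < (|c| + 1) * (ε / (2 * (|c| + 1))) + (|d| + 1) * (ε / (2 * (|d| + 1))) := by
        apply add_lt_add
        · exact mul_lt_mul' (by linarith) e1 (abs_nonneg _) hc1
        · exact mul_lt_mul' (by linarith) e2 (abs_nonneg _) hd1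
    _ = ε := by field_simp; ring
  
lemma SO_sup {f g : NNReal → ℝ} (hf : SO f) (hg : SO g) : SO (f ⊔ g) := by
  rw [SO_iff] at *
  obtain ⟨hfc, hf⟩ := hf; obtain ⟨hgc, hg⟩ := hg
  refine ⟨hfc.max hgc, fun R hR ε hε => ?_⟩
  obtain ⟨M1, hM1, h1⟩ := hf R hR ε hε
  obtain ⟨M2, hM2, h2⟩ := hg R hR ε hε
  refine ⟨max M1 M2, lt_max_of_lt_left hM1, fun x hx a ha b hb => ?_⟩
  have e1 := h1 x (lt_of_le_of_lt (le_max_left _ _) hx) a ha b hb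
  have e2 := h2 x (lt_of_le_of_lt (le_max_right _ _) hx) a ha b hb
  calc |(f ⊔ g) a - (f ⊔ g) b| ≤ max |f a - f b| |g a - g b| :=
        abs_max_sub_max_le_max _ _ _ _
    _ < ε := max_lt e1 e2

lemma SO_inf {f g : NNReal → ℝ} (hf : SO f) (hg : SO g) : SO (f ⊓ g) := by
  rw [SO_iff] at *
  obtain ⟨hfc, hf⟩ := hf; obtain ⟨hgc, hg⟩ := hg
  refine ⟨hfc.min hgc, fun R hR ε hε => ?_⟩
  obtain ⟨M1, hM1, h1⟩ := hf R hR ε hε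
  obtain ⟨M2, hM2, h2⟩ := hg R hR ε hε
  refine ⟨max M1 M2, lt_max_of_lt_left hM1, fun x hx a ha b hb => ?_⟩
  have e1 := h1 x (lt_of_le_of_lt (le_max_left _ _) hx) a ha b hb
  have e2 := h2 x (lt_of_le_of_lt (le_max_right _ _) hx) a ha b hb
  calc |(f ⊓ g) a - (f ⊓ g) b| ≤ max |f a - f b| |g a - g b| :=
        abs_min_sub_min_le_max _ _ _ _
    _ < ε := max_lt e1 e2

lemma phi_smul {φ} (hφ : IsHom φ) {f : NNReal → ℝ} (hf : SO f) (c : ℝ) :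
    φ (c • f) = c * φ f := by
  have := hφ.1 f f hf hf c 0
  simpa using this

lemma phi_mono {φ} (hφ : IsHom φ) {f g : NNReal → ℝ} (hf : SO f) (hg : SO g)
    (h : f ≤ g) : φ f ≤ φ g := by
  have := hφ.2.1 f g hf hg
  rw [sup_eq_right.mpr h] at this
  rw [this]; exact le_max_left _ _

def FSup : (k : ℕ) → (Fin (k+1) → NNReal → ℝ) → (NNReal → ℝ)
  | 0, v => v 0
  | (k+1), v => (v 0) ⊔ FSup k (fun i => v i.succ)

lemma FSup_SO : ∀ (k : ℕ) (v : Fin (k+1) → NNReal → ℝ), (∀ i, SO (v i)) →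
    SO (FSup k v)
  | 0, v, hv => hv 0
  | (k+1), v, hv => SO_sup (hv 0) (FSup_SO k _ (fun i => hv i.succ))

lemma FSup_phi {φ} (hφ : IsHom φ) : ∀ (k : ℕ) (v : Fin (k+1) → NNReal → ℝ),
    (∀ i, SO (v i)) → (∀ i, φ (v i) = 0) → φ (FSup k v) = 0
  | 0, v, _, h0 => h0 0
  | (k+1), v, hv, h0 => by
    have := hφ.2.1 (v 0) (FSup k (fun i => v i.succ)) (hv 0)
      (FSup_SO k _ (fun i => hv i.succ))
    rw [FSup, this, h0 0, FSup_phi hφ k _ (fun i => hv i.succ) (fun i => h0 i.succ)]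
    simp

lemma FSup_le : ∀ (k : ℕ) (v : Fin (k+1) → NNReal → ℝ) (i : Fin (k+1)) (x : NNReal),
    v i x ≤ FSup k v x
  | 0, v, i, x => by rw [Fin.eq_zero i]; rfl
  | (k+1), v, i, x => by
    rcases Fin.eq_zero_or_eq_succ i with h | ⟨j, rfl⟩
    · subst h; exact le_max_left _ _
    · exact le_trans (FSup_le k (fun i => v i.succ) j x) (le_max_right _ _)

lemma SO_smul {f : NNReal → ℝ} (hf : SO f) (c : ℝ) : SO (c • f) := by
  have := SO_combo hf hf c 0
  simpa using this

lemma SO_one : SO (1 : NNReal → ℝ) := SO_const 1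

theorem stmt_7 (f : NNReal → ℝ) (hf : SO f) (hf1 : ∀ x, 1 ≤ f x)
    (φ : (NNReal → ℝ) → ℝ) (hφ : IsHom φ) (hφf : φ f = 1) (hφ1 : φ 1 = 0) :
    ∀ ε : ℝ, 0 < ε → ∀ (k : ℕ) (g : Fin k → NNReal → ℝ), (∀ i, SO (g i)) →
      ∃ n : ℕ, ∀ i, |φ (g i) - g i n / f n| < ε := by
  intro ε hε k g hg
  rcases k with _ | m
  · exact ⟨0, fun i => i.elim0⟩
  by_contra hcon
  push_neg at hcon
  set a : Fin (m+1) → ℝ := fun i => φ (g i) with ha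
  set u : Fin (m+1) → NNReal → ℝ := fun i => (1:ℝ) • g i + (-(a i)) • f with hu
  have hSOu : ∀ i, SO (u i) := fun i => SO_combo (hg i) hf 1 (-(a i))
  have hφu : ∀ i, φ (u i) = 0 := by
    intro i
    rw [hu]
    simp only
    rw [hφ.1 (g i) f (hg i) hf 1 (-(a i)), hφf]
    ring
  set v : Fin (m+1) → NNReal → ℝ := fun i => u i ⊔ ((-1:ℝ) • u i) with hv
  have hSOv : ∀ i, SO (v i) := fun i => SO_sup (hSOu i) (SO_smul (hSOu i) (-1))
  have hφv : ∀ i, φ (v i) = 0 := by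
    intro i
    rw [hv]
    simp only
    rw [hφ.2.1 _ _ (hSOu i) (SO_smul (hSOu i) (-1)), phi_smul hφ (hSOu i), hφu i]
    simp
  have hvabs : ∀ i x, v i x = |u i x| := by
    intro i x
    simp [hv, Pi.sup_apply, abs_eq_max_neg]
  set h : NNReal → ℝ := FSup m v with hh
  have hSOh : SO h := FSup_SO m v hSOv
  have hφh : φ h = 0 := FSup_phi hφ m v hSOv hφv
  have hvle : ∀ i x, v i x ≤ h x := fun i x => FSup_le m v i x
  have hpos : ∀ x, 0 < f x := fun x => lt_of_lt_of_le one_pos (hf1 x)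
  -- key estimate at naturals
  have hnat : ∀ n : ℕ, ε * f n ≤ h n := by
    intro n
    obtain ⟨i, hi⟩ := hcon n
    have hfn := hpos (n : NNReal)
    have hmul : f n * ε ≤ f n * |φ (g i) - g i n / f n| :=
      mul_le_mul_of_nonneg_left hi hfn.le
    calc ε * f n ≤ f n * |φ (g i) - g i n / f n| := by linarith [hmul, mul_comm ε (f (n:NNReal))]
      _ = |f n * (φ (g i) - g i n / f n)| := by
          rw [abs_mul, abs_of_pos hfn]
      _ = |u i n| := by
          have heq : f (n:NNReal) * (φ (g i) - g i n / f n) = -(u i n) := by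
            simp only [hu, Pi.add_apply, Pi.smul_apply, smul_eq_mul, ha]
            field_simp
            ring
          rw [heq, abs_neg]
      _ = v i n := (hvabs i n).symm
      _ ≤ h n := hvle i n
  -- slow oscillation estimates
  obtain ⟨hhc, hso⟩ := (SO_iff h).mp hSOh
  obtain ⟨hfc, fso⟩ := (SO_iff f).mp hf
  obtain ⟨M1, hM1, H1⟩ := hso 1 one_pos 1 one_pos
  obtain ⟨M2, hM2, H2⟩ := fso 1 one_pos 1 one_pos
  set M0 := max M1 M2 with hM0
  -- bound f on the compact initial segment
  obtain ⟨z, hz, hzmax⟩ := IsCompact.exists_isMaxOn isCompact_Icc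
    (Set.nonempty_Icc.mpr (zero_le : (0:NNReal) ≤ M0 + 1)) hfc.continuousOn
  set C : ℝ := max (ε + 1) (ε * f z) with hC
  have hC1 : ε + 1 ≤ C := le_max_left _ _
  have hC0 : 0 ≤ C := le_trans (by linarith) hC1
  have key : ∀ x : NNReal, ε * f x - C ≤ h x := by
    intro x
    rcases le_or_gt x (M0 + 1) with hx | hx
    · have h1 : f x ≤ f z := hzmax ⟨(zero_le : (0:NNReal) ≤ x), hx⟩
      have h2 : ε * f x ≤ ε * f z := by nlinarith
      have h3 : 0 ≤ h x := le_trans (by rw [hvabs]; exact abs_nonneg _) (hvle 0 x)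
      have h4 : ε * f z ≤ C := le_max_right _ _
      linarith
    · set n := ⌊x⌋₊ with hn
      set y : NNReal := (n : NNReal) with hy
      have hyx : y ≤ x := Nat.floor_le (zero_le : (0:NNReal) ≤ x)
      have hxy1 : x < y + 1 := Nat.lt_floor_add_one x
      have hMy : M0 < y := by
        have : M0 + 1 < y + 1 := lt_trans hx hxy1
        exact lt_of_add_lt_add_right this
      have hxmem : x ∈ Set.Icc y (y + 1) := ⟨hyx, hxy1.le⟩
      have hymem : y ∈ Set.Icc y (y + 1) := ⟨le_refl _, le_self_add⟩
      have e1 : |h x - h y| < 1 :=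
        H1 y (lt_of_le_of_lt (le_max_left _ _) hMy) x hxmem y hymem
      have e2 : |f x - f y| < 1 :=
        H2 y (lt_of_le_of_lt (le_max_right _ _) hMy) x hxmem y hymem
      have e3 := hnat n
      have a1 := abs_lt.mp e1
      have a2 := abs_lt.mp e2
      have : h y = h (n : NNReal) := rfl
      have : ε * f y ≥ ε * f x - ε := by nlinarith [a2.1, a2.2]
      have e3' : ε * f y ≤ h y := e3
      linarith [a1.1, a1.2]
  -- contradiction via the homomorphism
  set L : NNReal → ℝ := ε • f + (-C) • (1 : NNReal → ℝ) with hL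
  have hSOL : SO L := SO_combo hf SO_one ε (-C)
  have hφL : φ L = ε := by
    rw [hL, hφ.1 f 1 hf SO_one ε (-C), hφf, hφ1]
    ring
  set K : NNReal → ℝ := h ⊓ (ε • f) with hK
  have hSOK : SO K := SO_inf hSOh (SO_smul hf ε)
  have hφK : φ K = 0 := by
    rw [hK, hφ.2.2 _ _ hSOh (SO_smul hf ε), phi_smul hφ hf, hφf, hφh]
    simp [min_eq_left]
    linarith
  have hLK : L ≤ K := by
    intro x
    simp only [hL, hK, Pi.add_apply, Pi.smul_apply, Pi.inf_apply, Pi.one_apply,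
      smul_eq_mul, mul_one, le_min_iff]
    constructor
    · linarith [key x]
    · linarith
  have := phi_mono hφ hSOL hSOK hLK
  rw [hφL, hφK] at this
  linarith
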